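/- arXiv:1703.03665 — 6 statements merged into one kernel-verified Lean document; each statement's English description precedes it below -/
import Mathlib

section
/- Let H = H₊ ⊕ H₋ be an orthogonal decomposition of a Hilbert space, let A be a bounded self-adjoint operator on H₊ that is uniformly positive (i.e. there is α > 0 with ⟨Ax,x⟩ ≥ α‖x‖² for all x), let K : H₋ → H₊ be bounded with ‖K‖ < 1, and let D be a bounded self-adjoint operator on H₋ such that D + K*AK is uniformly positive. Then the block operator S = [[A, -AK],[K*A, D]] on H₊ ⊕ H₋ is boundedly invertible. -/
open ContinuousLinearMap

/-!
`S` factors as `[[I, 0], [K*, I]] · [[A, 0], [0, D + K*AK]] · [[I, -K], [0, I]]`. The outer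
factors are shears, hence invertible, and the diagonal blocks are invertible because they are
uniformly positive (an operator `T` with `c‖x‖² ≤ Re⟪Tx, x⟫` is bounded below and has dense range).
-/

/-- The block operator `S = [[A, -AK],[K*A, D]]` acting on `Hp × Hm`
(`Hp` playing the role of `H₊`, `Hm` that of `H₋`). -/
noncomputable def blockOp {Hp Hm : Type*} [NormedAddCommGroup Hp] [InnerProductSpace ℂ Hp]
    [NormedAddCommGroup Hm] [InnerProductSpace ℂ Hm] [CompleteSpace Hp] [CompleteSpace Hm]
    (A : Hp →L[ℂ] Hp) (K : Hm →L[ℂ] Hp) (D : Hm →L[ℂ] Hm) :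
    (Hp × Hm) →L[ℂ] (Hp × Hm) :=
  ((A ∘L fst ℂ Hp Hm) - (A ∘L K ∘L snd ℂ Hp Hm)).prod
    (((adjoint K) ∘L A ∘L fst ℂ Hp Hm) + (D ∘L snd ℂ Hp Hm))

namespace ContinuousLinearMap

theorem isUnit_of_forall_le_re_inner {𝕜 E : Type*} [RCLike 𝕜] [NormedAddCommGroup E]
    [InnerProductSpace 𝕜 E] [CompleteSpace E] (T : E →L[𝕜] E) {c : ℝ} (hc : 0 < c)
    (h : ∀ x, c * ‖x‖ ^ 2 ≤ RCLike.re (inner 𝕜 (T x) x)) : IsUnit T :=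
  T.isUnit_of_forall_le_norm_inner_map (c := ⟨c, hc.le⟩) hc fun x =>
    (mul_comm _ _).le.trans ((h x).trans (RCLike.re_le_norm _))

section Shear

variable {R M N : Type*} [Ring R] [AddCommGroup M] [Module R M] [TopologicalSpace M]
  [IsTopologicalAddGroup M] [AddCommGroup N] [Module R N] [TopologicalSpace N]
  [IsTopologicalAddGroup N]

def lowerShear (B : M →L[R] N) : (M × N) →L[R] (M × N) :=
  (fst R M N).prod (B ∘L fst R M N + snd R M N)

def upperShear (B : N →L[R] M) : (M × N) →L[R] (M × N) :=
  (fst R M N + B ∘L snd R M N).prod (snd R M N)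

theorem isUnit_lowerShear (B : M →L[R] N) : IsUnit (lowerShear B) :=
  ⟨⟨lowerShear B, lowerShear (-B), by ext <;> simp [lowerShear], by ext <;> simp [lowerShear]⟩,
    rfl⟩

theorem isUnit_upperShear (B : N →L[R] M) : IsUnit (upperShear B) :=
  ⟨⟨upperShear B, upperShear (-B), by ext <;> simp [upperShear], by ext <;> simp [upperShear]⟩,
    rfl⟩

end Shear

theorem isUnit_prodMap {R M N : Type*} [Semiring R] [AddCommMonoid M] [Module R M]
    [TopologicalSpace M] [AddCommMonoid N] [Module R N] [TopologicalSpace N]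
    {f : M →L[R] M} {g : N →L[R] N} (hf : IsUnit f) (hg : IsUnit g) : IsUnit (f.prodMap g) := by
  obtain ⟨u, rfl⟩ := hf
  obtain ⟨v, rfl⟩ := hg
  exact ⟨((ContinuousLinearEquiv.unitsEquiv R M u).prodCongr
    (ContinuousLinearEquiv.unitsEquiv R N v)).toUnit, rfl⟩

end ContinuousLinearMap

theorem blockOp_eq_lowerShear_mul_prodMap_mul_upperShear {Hp Hm : Type*}
    [NormedAddCommGroup Hp] [InnerProductSpace ℂ Hp] [NormedAddCommGroup Hm]
    [InnerProductSpace ℂ Hm] [CompleteSpace Hp] [CompleteSpace Hm]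
    (A : Hp →L[ℂ] Hp) (K : Hm →L[ℂ] Hp) (D : Hm →L[ℂ] Hm) :
    blockOp A K D =
      lowerShear (adjoint K) * A.prodMap (D + adjoint K ∘L A ∘L K) * upperShear (-K) := by
  refine ContinuousLinearMap.ext fun ⟨x, y⟩ => ?_
  simp only [blockOp, lowerShear, upperShear, mul_def, sub_eq_add_neg, prod_apply, add_apply,
    comp_apply, coe_fst', coe_snd', neg_apply, neg_comp, coe_prodMap', FunLike.coe_add,
    Prod.map_apply, map_add, map_neg, Pi.add_apply, Prod.mk.injEq, true_and]
  abel

theorem stmt0_general {Hp Hm : Type*} [NormedAddCommGroup Hp] [InnerProductSpace ℂ Hp]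
    [NormedAddCommGroup Hm] [InnerProductSpace ℂ Hm] [CompleteSpace Hp] [CompleteSpace Hm]
    (A : Hp →L[ℂ] Hp) (K : Hm →L[ℂ] Hp) (D : Hm →L[ℂ] Hm)
    (hApos : ∃ α > (0:ℝ), ∀ x : Hp, α * ‖x‖ ^ 2 ≤ (inner ℂ (A x) x : ℂ).re)
    (hDK : ∃ c > (0:ℝ), ∀ y : Hm,
      c * ‖y‖ ^ 2 ≤ (inner ℂ ((D + (adjoint K) ∘L A ∘L K) y) y : ℂ).re) :
    IsUnit (blockOp A K D) := by
  obtain ⟨α, hα, hA⟩ := hApos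
  obtain ⟨c, hc, hE⟩ := hDK
  rw [blockOp_eq_lowerShear_mul_prodMap_mul_upperShear]
  have hAunit := A.isUnit_of_forall_le_re_inner hα hA
  have hEunit := (D + adjoint K ∘L A ∘L K).isUnit_of_forall_le_re_inner hc hE
  exact ((isUnit_lowerShear _).mul (isUnit_prodMap hAunit hEunit)).mul (isUnit_upperShear _)

theorem stmt0 {Hp Hm : Type*} [NormedAddCommGroup Hp] [InnerProductSpace ℂ Hp]
    [NormedAddCommGroup Hm] [InnerProductSpace ℂ Hm] [CompleteSpace Hp] [CompleteSpace Hm]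
    (A : Hp →L[ℂ] Hp) (K : Hm →L[ℂ] Hp) (D : Hm →L[ℂ] Hm)
    (hA : IsSelfAdjoint A)
    (hApos : ∃ α > (0:ℝ), ∀ x : Hp, α * ‖x‖ ^ 2 ≤ (inner ℂ (A x) x : ℂ).re)
    (hK : ‖K‖ < 1)
    (hD : IsSelfAdjoint D)
    (hDK : ∃ c > (0:ℝ), ∀ y : Hm,
      c * ‖y‖ ^ 2 ≤ (inner ℂ ((D + (adjoint K) ∘L A ∘L K) y) y : ℂ).re) :
    IsUnit (blockOp A K D) :=
  stmt0_general A K D hApos hDK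
end

section
/- Let H = H₊ ⊕ H₋ be an orthogonal decomposition of a Hilbert space, A ∈ L(H₊) uniformly positive, K ∈ L(H₋,H₊) with ‖K‖ < 1, D ∈ L(H₋) self-adjoint with D + K*AK uniformly positive, and let S = [[A, -AK],[K*A, D]]. Then S is invertible and S⁻¹ = [[A⁻¹ - KZK*, KZ],[-ZK*, Z]], where Z = (D + K*AK)⁻¹. -/
/-!
`D + K*AK` is the Schur complement of `A` in `S` and `Z` is its inverse, so the claimed inverse is
the usual block-elimination formula. Expanding `S S⁻¹` and `S⁻¹ S` componentwise, every component
collapses to the identity by `A A⁻¹ = A⁻¹ A = 1` and `(D + K*AK) Z = Z (D + K*AK) = 1`.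
-/

open ContinuousLinearMap

/-- The block operator `[[A⁻¹ - KZK*, KZ],[-ZK*, Z]]`, the claimed inverse. -/
noncomputable def blockInvOp {Hp Hm : Type*} [NormedAddCommGroup Hp] [InnerProductSpace ℂ Hp]
    [NormedAddCommGroup Hm] [InnerProductSpace ℂ Hm] [CompleteSpace Hp] [CompleteSpace Hm]
    (Ainv : Hp →L[ℂ] Hp) (K : Hm →L[ℂ] Hp) (Z : Hm →L[ℂ] Hm) :
    (Hp × Hm) →L[ℂ] (Hp × Hm) :=
  (((Ainv - K ∘L Z ∘L adjoint K) ∘L fst ℂ Hp Hm) + ((K ∘L Z) ∘L snd ℂ Hp Hm)).prod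
    ((-(Z ∘L adjoint K) ∘L fst ℂ Hp Hm) + (Z ∘L snd ℂ Hp Hm))

section

variable {Hp Hm : Type*} [NormedAddCommGroup Hp] [InnerProductSpace ℂ Hp]
    [NormedAddCommGroup Hm] [InnerProductSpace ℂ Hm] [CompleteSpace Hp] [CompleteSpace Hm]
    {A Ainv : Hp →L[ℂ] Hp} {K : Hm →L[ℂ] Hp} {D Z : Hm →L[ℂ] Hm}

theorem blockOp_apply (x : Hp) (y : Hm) :
    blockOp A K D (x, y) = (A x - A (K y), adjoint K (A x) + D y) :=
  rfl

theorem blockInvOp_apply (x : Hp) (y : Hm) :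
    blockInvOp Ainv K Z (x, y) =
      (Ainv x - K (Z (adjoint K x)) + K (Z y), -Z (adjoint K x) + Z y) :=
  rfl

theorem blockOp_comp_blockInvOp (hAinv : A ∘L Ainv = 1)
    (hZ : (D + adjoint K ∘L A ∘L K) ∘L Z = 1) :
    blockOp A K D ∘L blockInvOp Ainv K Z = 1 := by
  have hA (x : Hp) : A (Ainv x) = x := by simpa using congr($hAinv x)
  have hZ (y : Hm) : D (Z y) + adjoint K (A (K (Z y))) = y := by simpa using congr($hZ y)
  refine ContinuousLinearMap.ext fun ⟨x, y⟩ => ?_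
  simp only [comp_apply, blockInvOp_apply, blockOp_apply, map_add, map_sub, map_neg, hA,
    one_apply_eq_self, Prod.mk.injEq]
  constructor
  · abel
  · linear_combination (norm := module) hZ y - hZ (adjoint K x)

theorem blockInvOp_comp_blockOp (hAinv : Ainv ∘L A = 1)
    (hZ : Z ∘L (D + adjoint K ∘L A ∘L K) = 1) :
    blockInvOp Ainv K Z ∘L blockOp A K D = 1 := by
  have hA (x : Hp) : Ainv (A x) = x := by simpa using congr($hAinv x)
  have hZ (y : Hm) : Z (D y) + Z (adjoint K (A (K y))) = y := by
    simpa [map_add] using congr($hZ y)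
  refine ContinuousLinearMap.ext fun ⟨x, y⟩ => ?_
  simp only [comp_apply, blockInvOp_apply, blockOp_apply, map_add, map_sub, hA,
    one_apply_eq_self, Prod.mk.injEq]
  have hKZ : K (Z (D y)) + K (Z (adjoint K (A (K y)))) = K y := by rw [← map_add, hZ]
  constructor
  · linear_combination (norm := module) hKZ
  · linear_combination (norm := module) hZ y

end

theorem stmt1_general {Hp Hm : Type*} [NormedAddCommGroup Hp] [InnerProductSpace ℂ Hp]
    [NormedAddCommGroup Hm] [InnerProductSpace ℂ Hm] [CompleteSpace Hp] [CompleteSpace Hm]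
    (A Ainv : Hp →L[ℂ] Hp) (K : Hm →L[ℂ] Hp) (D Z : Hm →L[ℂ] Hm)
    (hAinv : A ∘L Ainv = 1 ∧ Ainv ∘L A = 1)
    (hZ : (D + (adjoint K) ∘L A ∘L K) ∘L Z = 1 ∧ Z ∘L (D + (adjoint K) ∘L A ∘L K) = 1) :
    blockOp A K D ∘L blockInvOp Ainv K Z = 1 ∧ blockInvOp Ainv K Z ∘L blockOp A K D = 1 :=
  ⟨blockOp_comp_blockInvOp hAinv.1 hZ.1, blockInvOp_comp_blockOp hAinv.2 hZ.2⟩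

theorem stmt1 {Hp Hm : Type*} [NormedAddCommGroup Hp] [InnerProductSpace ℂ Hp]
    [NormedAddCommGroup Hm] [InnerProductSpace ℂ Hm] [CompleteSpace Hp] [CompleteSpace Hm]
    (A Ainv : Hp →L[ℂ] Hp) (K : Hm →L[ℂ] Hp) (D Z : Hm →L[ℂ] Hm)
    (hA : IsSelfAdjoint A)
    (hApos : ∃ α > (0:ℝ), ∀ x : Hp, α * ‖x‖ ^ 2 ≤ (inner ℂ (A x) x : ℂ).re)
    (hAinv : A ∘L Ainv = 1 ∧ Ainv ∘L A = 1)
    (hK : ‖K‖ < 1)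
    (hD : IsSelfAdjoint D)
    (hDK : ∃ c > (0:ℝ), ∀ y : Hm,
      c * ‖y‖ ^ 2 ≤ (inner ℂ ((D + (adjoint K) ∘L A ∘L K) y) y : ℂ).re)
    (hZ : (D + (adjoint K) ∘L A ∘L K) ∘L Z = 1 ∧ Z ∘L (D + (adjoint K) ∘L A ∘L K) = 1) :
    blockOp A K D ∘L blockInvOp Ainv K Z = 1 ∧ blockInvOp Ainv K Z ∘L blockOp A K D = 1 :=
  stmt1_general A Ainv K D Z hAinv hZ
end

section
/- Let S = [[A,-AK],[K*A,D]] with A uniformly positive and ‖K‖ < 1, and suppose that D + K*AK is a bounded self-adjoint operator on the Hilbert space H₋ which is uniformly positive with lower numerical-range bound b₋ = inf W(D + K*AK) > 0. Then every real λ < min{inf W(A), b₋} belongs to the resolvent set of S. -/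
open ContinuousLinearMap

lemma lb_all {H : Type*} [NormedAddCommGroup H] [InnerProductSpace ℂ H]
    (A : H →L[ℂ] H) (a : ℝ) (ha : ∀ x : H, ‖x‖ = 1 → a ≤ (inner ℂ (A x) x : ℂ).re) :
    ∀ x : H, a * ‖x‖ ^ 2 ≤ (inner ℂ (A x) x : ℂ).re := by
  intro x
  rcases eq_or_ne x 0 with rfl | hx
  · simp
  · have hn : (0:ℝ) < ‖x‖ := norm_pos_iff.mpr hx
    set u : H := ((‖x‖ : ℂ))⁻¹ • x with hu
    have h1 : ‖u‖ = 1 := by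
      simp [hu, norm_smul, inv_mul_cancel₀ hn.ne']
    have h2 : (inner ℂ (A u) u : ℂ) = ((‖x‖ : ℂ))⁻¹ * ((‖x‖:ℂ))⁻¹ * inner ℂ (A x) x := by
      simp [hu, inner_smul_left, inner_smul_right, map_smul, Complex.conj_ofReal]
      ring
    have h3 := ha u h1
    rw [h2] at h3
    have h4 : (((‖x‖ : ℂ))⁻¹ * ((‖x‖:ℂ))⁻¹ * inner ℂ (A x) x).re
        = ‖x‖⁻¹ * ‖x‖⁻¹ * (inner ℂ (A x) x : ℂ).re := by
      rw [← Complex.ofReal_inv, ← Complex.ofReal_mul, Complex.re_ofReal_mul]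
    rw [h4] at h3
    have key : ‖x‖⁻¹ * ‖x‖ = 1 := inv_mul_cancel₀ hn.ne'
    calc a * ‖x‖ ^ 2 ≤ ‖x‖⁻¹ * ‖x‖⁻¹ * (inner ℂ (A x) x : ℂ).re * ‖x‖ ^ 2 :=
          mul_le_mul_of_nonneg_right h3 (by positivity)
      _ = (inner ℂ (A x) x : ℂ).re * (‖x‖⁻¹ * ‖x‖) ^ 2 := by ring
      _ = (inner ℂ (A x) x : ℂ).re := by rw [key]; ring

lemma re_inner_real_smul_left {H : Type*} [NormedAddCommGroup H] [InnerProductSpace ℂ H]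
    (r : ℝ) (w v : H) : (inner ℂ ((r : ℂ) • w) v : ℂ).re = r * (inner ℂ w v : ℂ).re := by
  rw [inner_smul_left]
  simp [Complex.conj_ofReal, Complex.re_ofReal_mul]

lemma re_inner_self' {H : Type*} [NormedAddCommGroup H] [InnerProductSpace ℂ H]
    (x : H) : (inner ℂ x x : ℂ).re = ‖x‖ ^ 2 := by
  simpa using inner_self_eq_norm_sq (𝕜 := ℂ) x

lemma re_inner_symm' {H : Type*} [NormedAddCommGroup H] [InnerProductSpace ℂ H]
    (w v : H) : (inner ℂ w v : ℂ).re = (inner ℂ v w : ℂ).re := by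
  rw [← inner_conj_symm w v]
  exact Complex.conj_re _

set_option maxHeartbeats 1000000 in
set_option synthInstance.maxHeartbeats 400000 in
theorem stmt4 {Hp Hm : Type*} [NormedAddCommGroup Hp] [InnerProductSpace ℂ Hp]
    [NormedAddCommGroup Hm] [InnerProductSpace ℂ Hm] [CompleteSpace Hp] [CompleteSpace Hm]
    (A : Hp →L[ℂ] Hp) (K : Hm →L[ℂ] Hp) (D : Hm →L[ℂ] Hm)
    (hA : IsSelfAdjoint A)
    (hApos : ∃ α > (0:ℝ), ∀ x : Hp, α * ‖x‖ ^ 2 ≤ (inner ℂ (A x) x : ℂ).re)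
    (hK : ‖K‖ < 1)
    (hD : IsSelfAdjoint D)
    (hDK : ∃ c > (0:ℝ), ∀ y : Hm,
      c * ‖y‖ ^ 2 ≤ (inner ℂ ((D + (adjoint K) ∘L A ∘L K) y) y : ℂ).re)
    -- `a` is a lower bound for the numerical range `W(A)`,
    -- `b` is a lower bound for the numerical range `W(D + K*AK)`
    (a b lam : ℝ)
    (ha : ∀ x : Hp, ‖x‖ = 1 → a ≤ (inner ℂ (A x) x : ℂ).re)
    (hb : ∀ y : Hm, ‖y‖ = 1 → b ≤ (inner ℂ ((D + (adjoint K) ∘L A ∘L K) y) y : ℂ).re)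
    (hlam : lam < min a b) :
    (lam : ℂ) ∉ spectrum ℂ (blockOp A K D) := by
  obtain ⟨c0, hc0, hE0⟩ := hDK
  set E : Hm →L[ℂ] Hm := D + (adjoint K) ∘L A ∘L K with hEdef
  have hla : lam < a := lt_of_lt_of_le hlam (min_le_left _ _)
  have hlb : lam < b := lt_of_lt_of_le hlam (min_le_right _ _)
  have hAa : ∀ x : Hp, a * ‖x‖ ^ 2 ≤ (inner ℂ (A x) x : ℂ).re := lb_all A a ha
  set β : ℝ := max b c0 with hβdef
  have hβpos : 0 < β := lt_of_lt_of_le hc0 (le_max_right _ _)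
  have hEβ : ∀ y : Hm, β * ‖y‖ ^ 2 ≤ (inner ℂ (E y) y : ℂ).re := by
    intro y
    rcases le_total b c0 with h | h
    · simpa [hβdef, max_eq_right h] using hE0 y
    · simpa [hβdef, max_eq_left h] using lb_all E b hb y
  set c : ℝ := min (a - lam) (β - max lam 0) with hcdef
  have hcpos : 0 < c := by
    apply lt_min (by linarith)
    rcases le_total lam 0 with h | h
    · rw [max_eq_right h]; linarith
    · rw [max_eq_left h]; linarith [lt_of_lt_of_le hlb (le_max_left b c0)]
  -- the coercive block operator T
  set T : (Hp × Hm) →L[ℂ] (Hp × Hm) :=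
    ((A ∘L fst ℂ Hp Hm) - (lam : ℂ) • fst ℂ Hp Hm - (lam : ℂ) • (K ∘L snd ℂ Hp Hm)).prod
      ((lam : ℂ) • ((adjoint K) ∘L fst ℂ Hp Hm) + (E ∘L snd ℂ Hp Hm)
        - (lam : ℂ) • snd ℂ Hp Hm + (lam : ℂ) • (((adjoint K) ∘L K) ∘L snd ℂ Hp Hm)) with hTdef
  have hT1 : ∀ z : Hp × Hm, (T z).1 = A z.1 - (lam : ℂ) • z.1 - (lam : ℂ) • K z.2 :=
    fun z => rfl
  have hT2 : ∀ z : Hp × Hm, (T z).2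
      = (lam : ℂ) • (adjoint K) z.1 + E z.2 - (lam : ℂ) • z.2
        + (lam : ℂ) • (adjoint K) (K z.2) :=
    fun z => rfl
  -- coercivity estimate, componentwise
  have key : ∀ z : Hp × Hm, c * (‖z.1‖ ^ 2 + ‖z.2‖ ^ 2)
      ≤ ((inner ℂ ((T z).1) z.1 : ℂ) + (inner ℂ ((T z).2) z.2 : ℂ)).re := by
    intro z
    rw [Complex.add_re, hT1, hT2]
    have e1 : ((inner ℂ (A z.1 - (lam : ℂ) • z.1 - (lam : ℂ) • K z.2) z.1 : ℂ)).re
        = (inner ℂ (A z.1) z.1 : ℂ).re - lam * ‖z.1‖ ^ 2 - lam * (inner ℂ (K z.2) z.1 : ℂ).re := by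
      simp only [inner_sub_left, Complex.sub_re, re_inner_real_smul_left, re_inner_self']
    have e2 : ((inner ℂ ((lam : ℂ) • (adjoint K) z.1 + E z.2 - (lam : ℂ) • z.2
          + (lam : ℂ) • (adjoint K) (K z.2)) z.2 : ℂ)).re
        = lam * (inner ℂ z.1 (K z.2) : ℂ).re + (inner ℂ (E z.2) z.2 : ℂ).re - lam * ‖z.2‖ ^ 2
          + lam * ‖K z.2‖ ^ 2 := by
      simp only [inner_add_left, inner_sub_left, Complex.add_re, Complex.sub_re,
        re_inner_real_smul_left, re_inner_self', adjoint_inner_left]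
    rw [e1, e2]
    have hKy : ‖K z.2‖ ≤ ‖K‖ * ‖z.2‖ := K.le_opNorm z.2
    have hKy' : ‖K z.2‖ ≤ ‖z.2‖ := hKy.trans (by nlinarith [norm_nonneg z.2])
    have hcross : -(lam * ‖z.2‖ ^ 2) + lam * ‖K z.2‖ ^ 2 ≥ -((max lam 0) * ‖z.2‖ ^ 2) := by
      have hsq : ‖K z.2‖ ^ 2 ≤ ‖z.2‖ ^ 2 := by
        nlinarith [norm_nonneg (K z.2), norm_nonneg z.2]
      rcases le_total lam 0 with h | h
      · rw [max_eq_right h]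
        nlinarith [mul_nonneg (neg_nonneg.2 h) (sub_nonneg.2 hsq)]
      · rw [max_eq_left h]
        nlinarith [mul_nonneg h (sq_nonneg ‖K z.2‖)]
    have hsym : lam * (inner ℂ (K z.2) z.1 : ℂ).re = lam * (inner ℂ z.1 (K z.2) : ℂ).re := by
      rw [re_inner_symm' (K z.2) z.1]
    have p1 : c * ‖z.1‖ ^ 2 ≤ (a - lam) * ‖z.1‖ ^ 2 :=
      mul_le_mul_of_nonneg_right (min_le_left _ _) (sq_nonneg _)
    have p2 : c * ‖z.2‖ ^ 2 ≤ (β - max lam 0) * ‖z.2‖ ^ 2 :=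
      mul_le_mul_of_nonneg_right (min_le_right _ _) (sq_nonneg _)
    nlinarith [hAa z.1, hEβ z.2, p1, p2, hcross, hsym]
  -- transfer to the Hilbert space `WithLp 2 (Hp × Hm)`
  set ι := WithLp.prodContinuousLinearEquiv 2 ℂ Hp Hm with hι
  set T' : WithLp 2 (Hp × Hm) →L[ℂ] WithLp 2 (Hp × Hm) :=
    (ι.symm : (Hp × Hm) →L[ℂ] WithLp 2 (Hp × Hm)) ∘L T ∘L
      (ι : WithLp 2 (Hp × Hm) →L[ℂ] (Hp × Hm)) with hT'def
  have hT'unit : IsUnit T' := by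
    apply ContinuousLinearMap.isUnit_of_forall_le_norm_inner_map T' (c := ⟨c, hcpos.le⟩) hcpos
    intro z
    have hz1 : (T' z).fst = (T (z.fst, z.snd)).1 := rfl
    have hz2 : (T' z).snd = (T (z.fst, z.snd)).2 := rfl
    have hinner : (inner ℂ (T' z) z : ℂ)
        = (inner ℂ ((T (z.fst, z.snd)).1) z.fst : ℂ)
          + (inner ℂ ((T (z.fst, z.snd)).2) z.snd : ℂ) := rfl
    have hnorm : ‖z‖ ^ 2 = ‖z.fst‖ ^ 2 + ‖z.snd‖ ^ 2 := WithLp.prod_norm_sq_eq_of_L2 z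
    have hk := key (z.fst, z.snd)
    rw [hinner, hnorm]
    calc (‖z.fst‖ ^ 2 + ‖z.snd‖ ^ 2) * ((⟨c, hcpos.le⟩ : NNReal) : ℝ)
        = c * (‖z.fst‖ ^ 2 + ‖z.snd‖ ^ 2) := by rw [mul_comm]
      _ ≤ ((inner ℂ ((T (z.fst, z.snd)).1) z.fst : ℂ)
            + (inner ℂ ((T (z.fst, z.snd)).2) z.snd : ℂ)).re := hk
      _ ≤ ‖(inner ℂ ((T (z.fst, z.snd)).1) z.fst : ℂ)
            + (inner ℂ ((T (z.fst, z.snd)).2) z.snd : ℂ)‖ := Complex.re_le_norm _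
  have hT'bij : Function.Bijective T' := ContinuousLinearMap.isUnit_iff_bijective.mp hT'unit
  have hTbij : Function.Bijective T := by
    have hfun : ⇑T = ι ∘ T' ∘ ι.symm := funext fun w => rfl
    rw [hfun]
    exact ι.bijective.comp (hT'bij.comp ι.symm.bijective)
  -- the triangular factors
  set Mop : (Hp × Hm) ≃ (Hp × Hm) :=
    ⟨fun z => (z.1 - K z.2, z.2), fun z => (z.1 + K z.2, z.2),
      fun z => by simp, fun z => by simp⟩ with hMop
  set Nop : (Hp × Hm) ≃ (Hp × Hm) :=
    ⟨fun z => (z.1, (adjoint K) z.1 + z.2), fun z => (z.1, -(adjoint K) z.1 + z.2),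
      fun z => by simp, fun z => by simp⟩ with hNop
  intro hmem
  rw [spectrum.mem_iff] at hmem
  apply hmem
  rw [ContinuousLinearMap.isUnit_iff_bijective]
  have hfactor : ⇑(algebraMap ℂ ((Hp × Hm) →L[ℂ] (Hp × Hm)) (lam : ℂ) - blockOp A K D)
      = (fun w : Hp × Hm => -w) ∘ ⇑Nop ∘ ⇑T ∘ ⇑Mop := by
    funext z
    obtain ⟨x, y⟩ := z
    show ((lam : ℂ) • (1 : (Hp × Hm) →L[ℂ] (Hp × Hm)) - blockOp A K D) (x, y)
        = -(Nop (T (Mop (x, y))))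
    simp only [hMop, hNop, Equiv.coe_fn_mk, ContinuousLinearMap.sub_apply,
      ContinuousLinearMap.smul_apply, ContinuousLinearMap.one_apply, blockOp,
      ContinuousLinearMap.prod_apply, ContinuousLinearMap.comp_apply,
      ContinuousLinearMap.add_apply, ContinuousLinearMap.coe_fst',
      ContinuousLinearMap.coe_snd', hT1, hT2, hEdef]
    simp only [Prod.smul_mk, Prod.mk_sub_mk, Prod.neg_mk, Prod.smul_def, Prod.fst, Prod.snd,
      map_sub, map_add, map_smul, Prod.mk.injEq]
    constructor
    · module
    · module
  rw [hfactor]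
  exact (neg_involutive.bijective).comp (Nop.bijective.comp (hTbij.comp Mop.bijective))
end

section
/- Let S = [[A, -AK],[K*A, D]] on H₊ ⊕ H₋ with A uniformly positive, ‖K‖ < 1, D self-adjoint with D + K*AK uniformly positive. If λ = x + iy with y ≠ 0 and x² - 2a₊x + y² ≥ 0, where a₊ = sup W(A), then λ is in the resolvent set of S. Equivalently, every non-real spectral point λ of S satisfies |λ - a₊| < a₊. -/
open ContinuousLinearMap

/-!
Since `λ` is not real, `A - λ` is invertible and `S - λ` factors through the Schur complement
`S₂(λ) = D - λ + K* A (A - λ)⁻¹ A K`, so it suffices to invert `S₂(λ)`. Writing `(A - λ) u = K v`,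
one finds `Im ⟪S₂(λ) v, v⟫ = Im λ · (‖v‖² - ‖A u‖²)`. The condition `|λ - a₊| ≥ a₊` on `λ`, together
with `0 ≤ A ≤ a₊`, gives `‖A u‖ ≤ ‖(A - λ) u‖ = ‖K v‖ ≤ ‖K‖ ‖v‖`, so the numerical range of `S₂(λ)`
stays at distance at least `(1 - ‖K‖²) |Im λ|` from `0`, and `S₂(λ)` is invertible.
-/

open RCLike
open scoped InnerProductSpace

theorem notMem_spectrum_iff_isUnit_sub_smul_one {R A : Type*} [CommSemiring R] [Ring A]
    [Algebra R A] {r : R} {a : A} : r ∉ spectrum R a ↔ IsUnit (a - r • 1) := by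
  rw [spectrum.notMem_iff, ← IsUnit.neg_iff, neg_sub, Algebra.algebraMap_eq_smul_one]

theorem isUnit_prod_of_isUnit_schur {R M N : Type*} [Ring R] [TopologicalSpace M]
    [AddCommGroup M] [Module R M] [IsTopologicalAddGroup M] [TopologicalSpace N]
    [AddCommGroup N] [Module R N] [IsTopologicalAddGroup N] {P : M →L[R] M} {Q : N →L[R] M} {C : M →L[R] N}
    {S : N →L[R] N} (hP : IsUnit P) (hS : IsUnit (S - C ∘L Ring.inverse P ∘L Q)) :
    IsUnit ((P ∘L fst R M N + Q ∘L snd R M N).prod (C ∘L fst R M N + S ∘L snd R M N)) := by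
  -- `[[P, Q], [C, S]] = [[P, 0], [C, S - C P⁻¹ Q]] * [[1, P⁻¹ Q], [0, 1]]`
  let eP := ContinuousLinearEquiv.unitsEquiv R M hP.unit
  let eS := ContinuousLinearEquiv.unitsEquiv R N hS.unit
  have hL : IsUnit ((eP.skewProd eS C : (M × N) ≃L[R] (M × N)) : (M × N) →L[R] (M × N)) :=
    ((ContinuousLinearEquiv.unitsEquiv R (M × N)).symm _).isUnit
  have hU : IsUnit (1 + inl R M N ∘L (Ring.inverse P ∘L Q) ∘L snd R M N) := by
    refine IsNilpotent.isUnit_one_add ⟨2, ?_⟩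
    ext x <;> simp [pow_two]
  have hPinv (y : M) : P (Ring.inverse P y) = y := by
    simpa using congr($(Ring.mul_inverse_cancel P hP) y)
  convert hL.mul hU using 1
  ext x <;> simp [eP, eS, hPinv]

theorem re_inner_le_mul_sq_norm_of_mem_upperBounds {𝕜 E : Type*} [RCLike 𝕜]
    [NormedAddCommGroup E] [InnerProductSpace 𝕜 E] (T : E →L[𝕜] E) {a : ℝ}
    (ha : a ∈ upperBounds {r : ℝ | ∃ x : E, ‖x‖ = 1 ∧ r = re ⟪T x, x⟫_𝕜}) (x : E) :
    re ⟪T x, x⟫_𝕜 ≤ a * ‖x‖ ^ 2 := by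
  rcases eq_or_ne x 0 with rfl | hx
  · simp
  have hx' : 0 < ‖x‖ := norm_pos_iff.2 hx
  have hunit : ‖((‖x‖⁻¹ : ℝ) : 𝕜) • x‖ = 1 := by
    rw [norm_smul, norm_algebraMap', norm_inv, norm_norm, inv_mul_cancel₀ hx'.ne']
  have h := ha ⟨_, hunit, rfl⟩
  rw [← reApplyInnerSelf_apply, reApplyInnerSelf_smul, norm_algebraMap', norm_inv, norm_norm,
    reApplyInnerSelf_apply] at h
  rwa [inv_pow, inv_mul_le_iff₀ (by positivity), mul_comm] at h

theorem norm_apply_le_norm_apply_sub_smul {H : Type*} [NormedAddCommGroup H]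
    [InnerProductSpace ℂ H] {A : H →L[ℂ] H} (hA : (A : H →ₗ[ℂ] H).IsSymmetric)
    (hA₀ : ∀ x, 0 ≤ re ⟪A x, x⟫_ℂ) {a : ℝ} (haA : ∀ x, re ⟪A x, x⟫_ℂ ≤ a * ‖x‖ ^ 2) {μ : ℂ}
    (hμ : 0 ≤ μ.re ^ 2 - 2 * a * μ.re + μ.im ^ 2) (u : H) :
    ‖A u‖ ≤ ‖A u - μ • u‖ := by
  have him : im ⟪A u, u⟫_ℂ = 0 := hA.im_inner_apply_self u
  have hexp : ‖A u - μ • u‖ ^ 2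
      = ‖A u‖ ^ 2 - 2 * μ.re * re ⟪A u, u⟫_ℂ + (μ.re ^ 2 + μ.im ^ 2) * ‖u‖ ^ 2 := by
    rw [@norm_sub_sq ℂ, inner_smul_right, norm_smul, mul_pow, Complex.sq_norm,
      Complex.normSq_apply]
    simp only [Complex.mul_re, RCLike.re_to_complex, RCLike.im_to_complex] at him ⊢
    rw [him]
    ring
  rw [← pow_le_pow_iff_left₀ (norm_nonneg _) (norm_nonneg _) two_ne_zero, hexp]
  have h₀ := hA₀ u
  have h₁ := haA u
  rcases le_or_gt 0 μ.re with hre | hre <;> nlinarith [sq_nonneg ‖u‖]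

section Schur

variable {Hp Hm : Type*} [NormedAddCommGroup Hp] [InnerProductSpace ℂ Hp]
  [NormedAddCommGroup Hm] [InnerProductSpace ℂ Hm] [CompleteSpace Hp] [CompleteSpace Hm]

theorem isUnit_sub_smul_one_of_im_ne_zero {A : Hp →L[ℂ] Hp} (hA : IsSelfAdjoint A) {μ : ℂ}
    (hμ : μ.im ≠ 0) : IsUnit (A - μ • 1) :=
  notMem_spectrum_iff_isUnit_sub_smul_one.1 fun h ↦ hμ <| by
    rw [hA.mem_spectrum_eq_re h, Complex.ofReal_im]

-- The paper's `S₂(μ)`; `Ring.inverse` is `0` unless `A - μ` is invertible.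
noncomputable def schurComplement (A : Hp →L[ℂ] Hp) (K : Hm →L[ℂ] Hp) (D : Hm →L[ℂ] Hm)
    (μ : ℂ) : Hm →L[ℂ] Hm :=
  D - μ • 1 + adjoint K ∘L A ∘L Ring.inverse (A - μ • 1) ∘L A ∘L K

theorem im_inner_schurComplement_apply_self {A : Hp →L[ℂ] Hp} (K : Hm →L[ℂ] Hp)
    {D : Hm →L[ℂ] Hm} (hA : IsSelfAdjoint A) (hD : IsSelfAdjoint D) {μ : ℂ}
    (hμ : IsUnit (A - μ • 1)) {u : Hp} {v : Hm} (hu : A u - μ • u = K v) :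
    im ⟪schurComplement A K D μ v, v⟫_ℂ = μ.im * (‖v‖ ^ 2 - ‖A u‖ ^ 2) := by
  have hAKv : A (K v) = (A - μ • 1) (K v + μ • u) := by
    rw [← hu]
    simp only [sub_apply, smul_apply, one_apply_eq_self, map_add, map_sub, map_smul]
    module
  have hres : Ring.inverse (A - μ • 1) (A (K v)) = K v + μ • u := by
    rw [hAKv, ← comp_apply, ← mul_def, Ring.inverse_mul_cancel _ hμ, one_apply_eq_self]
  have hS : schurComplement A K D μ v = D v - μ • v + adjoint K (A (K v) + μ • A u) := by
    simp [schurComplement, hres]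
  have hAu : ⟪A u, K v⟫_ℂ = ‖A u‖ ^ 2 - μ * ⟪A u, u⟫_ℂ := by
    rw [← hu, inner_sub_right, inner_smul_right, inner_self_eq_norm_sq_to_K]
    simp
  rw [hS, inner_add_left, inner_sub_left, adjoint_inner_left, inner_add_left, inner_smul_left,
    inner_smul_left, hAu, inner_self_eq_norm_sq_to_K]
  have h₁ := hD.isSymmetric.im_inner_apply_self v
  have h₂ := hA.isSymmetric.im_inner_apply_self (K v)
  have h₃ := hA.isSymmetric.im_inner_apply_self u
  simp only [coe_coe, RCLike.im_to_complex] at h₁ h₂ h₃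
  simp only [Complex.coe_algebraMap, ← Complex.ofReal_pow, im_to_complex, Complex.add_im,
    Complex.sub_im, Complex.mul_im, Complex.conj_re, Complex.conj_im, Complex.ofReal_re,
    Complex.ofReal_im, Complex.sub_re, Complex.mul_re, h₁, h₂, h₃]
  ring

theorem mul_le_norm_inner_schurComplement_apply_self {A : Hp →L[ℂ] Hp} (K : Hm →L[ℂ] Hp)
    {D : Hm →L[ℂ] Hm} (hA : IsSelfAdjoint A) (hD : IsSelfAdjoint D)
    (hA₀ : ∀ x, 0 ≤ re ⟪A x, x⟫_ℂ) {a : ℝ} (haA : ∀ x, re ⟪A x, x⟫_ℂ ≤ a * ‖x‖ ^ 2) {μ : ℂ}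
    (hμ : IsUnit (A - μ • 1)) (hμa : 0 ≤ μ.re ^ 2 - 2 * a * μ.re + μ.im ^ 2) (v : Hm) :
    ‖v‖ ^ 2 * ((1 - ‖K‖ ^ 2) * |μ.im|) ≤ ‖⟪schurComplement A K D μ v, v⟫_ℂ‖ := by
  set u := Ring.inverse (A - μ • 1) (K v)
  have hu : A u - μ • u = K v := by
    simpa using congr($(Ring.mul_inverse_cancel _ hμ) (K v))
  have hAu : ‖A u‖ ≤ ‖K‖ * ‖v‖ :=
    calc ‖A u‖ ≤ ‖A u - μ • u‖ := norm_apply_le_norm_apply_sub_smul hA.isSymmetric hA₀ haA hμa u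
      _ = ‖K v‖ := by rw [hu]
      _ ≤ ‖K‖ * ‖v‖ := K.le_opNorm v
  have hgap : (1 - ‖K‖ ^ 2) * ‖v‖ ^ 2 ≤ ‖v‖ ^ 2 - ‖A u‖ ^ 2 := by
    nlinarith [pow_le_pow_left₀ (norm_nonneg _) hAu 2]
  calc ‖v‖ ^ 2 * ((1 - ‖K‖ ^ 2) * |μ.im|) ≤ |μ.im| * (‖v‖ ^ 2 - ‖A u‖ ^ 2) := by
        nlinarith [abs_nonneg μ.im]
    _ ≤ |im ⟪schurComplement A K D μ v, v⟫_ℂ| := by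
        rw [im_inner_schurComplement_apply_self K hA hD hμ hu, abs_mul]
        exact mul_le_mul_of_nonneg_left (le_abs_self _) (abs_nonneg _)
    _ ≤ ‖⟪schurComplement A K D μ v, v⟫_ℂ‖ := Complex.abs_im_le_norm _

theorem isUnit_schurComplement {A : Hp →L[ℂ] Hp} {K : Hm →L[ℂ] Hp} {D : Hm →L[ℂ] Hm}
    (hA : IsSelfAdjoint A) (hD : IsSelfAdjoint D) (hA₀ : ∀ x, 0 ≤ re ⟪A x, x⟫_ℂ) {a : ℝ}
    (haA : ∀ x, re ⟪A x, x⟫_ℂ ≤ a * ‖x‖ ^ 2) (hK : ‖K‖ < 1) {μ : ℂ} (hμ : μ.im ≠ 0)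
    (hμa : 0 ≤ μ.re ^ 2 - 2 * a * μ.re + μ.im ^ 2) :
    IsUnit (schurComplement A K D μ) := by
  have hc : 0 < (1 - ‖K‖ ^ 2) * |μ.im| :=
    mul_pos (by nlinarith [norm_nonneg K]) (abs_pos.2 hμ)
  exact isUnit_of_forall_le_norm_inner_map _ (c := ⟨_, hc.le⟩) hc
    (mul_le_norm_inner_schurComplement_apply_self K hA hD hA₀ haA
      (isUnit_sub_smul_one_of_im_ne_zero hA hμ) hμa)

theorem blockOp_sub_smul_one (A : Hp →L[ℂ] Hp) (K : Hm →L[ℂ] Hp) (D : Hm →L[ℂ] Hm) (μ : ℂ) :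
    blockOp A K D - μ • 1 = ((A - μ • 1) ∘L fst ℂ Hp Hm + (-(A ∘L K)) ∘L snd ℂ Hp Hm).prod
      ((adjoint K ∘L A) ∘L fst ℂ Hp Hm + (D - μ • 1) ∘L snd ℂ Hp Hm) := by
  ext x <;> simp [blockOp]

theorem schurComplement_eq (A : Hp →L[ℂ] Hp) (K : Hm →L[ℂ] Hp) (D : Hm →L[ℂ] Hm) (μ : ℂ) :
    schurComplement A K D μ
      = D - μ • 1 - (adjoint K ∘L A) ∘L Ring.inverse (A - μ • 1) ∘L (-(A ∘L K)) := by
  simp only [schurComplement, comp_neg, sub_neg_eq_add, comp_assoc]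

end Schur

theorem stmt5_general {Hp Hm : Type*} [NormedAddCommGroup Hp] [InnerProductSpace ℂ Hp]
    [NormedAddCommGroup Hm] [InnerProductSpace ℂ Hm] [CompleteSpace Hp] [CompleteSpace Hm]
    (A : Hp →L[ℂ] Hp) (K : Hm →L[ℂ] Hp) (D : Hm →L[ℂ] Hm)
    (hA : IsSelfAdjoint A)
    (hApos : ∃ α > (0:ℝ), ∀ x : Hp, α * ‖x‖ ^ 2 ≤ (inner ℂ (A x) x : ℂ).re)
    (hK : ‖K‖ < 1)
    (hD : IsSelfAdjoint D)
    -- `aPlus = sup W(A)`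
    (aPlus : ℝ)
    (haPlus : IsLUB {r : ℝ | ∃ x : Hp, ‖x‖ = 1 ∧ r = (inner ℂ (A x) x : ℂ).re} aPlus)
    (lam : ℂ) (him : lam.im ≠ 0)
    (hcond : 0 ≤ lam.re ^ 2 - 2 * aPlus * lam.re + lam.im ^ 2) :
    lam ∉ spectrum ℂ (blockOp A K D) := by
  obtain ⟨α, hα, hαA⟩ := hApos
  have hA₀ (x : Hp) : 0 ≤ re ⟪A x, x⟫_ℂ := le_trans (by positivity) (hαA x)
  have haA := re_inner_le_mul_sq_norm_of_mem_upperBounds A haPlus.1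
  rw [notMem_spectrum_iff_isUnit_sub_smul_one, blockOp_sub_smul_one]
  refine isUnit_prod_of_isUnit_schur (isUnit_sub_smul_one_of_im_ne_zero hA him) ?_
  rw [← schurComplement_eq]
  exact isUnit_schurComplement hA hD hA₀ haA hK him hcond

theorem stmt5 {Hp Hm : Type*} [NormedAddCommGroup Hp] [InnerProductSpace ℂ Hp]
    [NormedAddCommGroup Hm] [InnerProductSpace ℂ Hm] [CompleteSpace Hp] [CompleteSpace Hm]
    (A : Hp →L[ℂ] Hp) (K : Hm →L[ℂ] Hp) (D : Hm →L[ℂ] Hm)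
    (hA : IsSelfAdjoint A)
    (hApos : ∃ α > (0:ℝ), ∀ x : Hp, α * ‖x‖ ^ 2 ≤ (inner ℂ (A x) x : ℂ).re)
    (hK : ‖K‖ < 1)
    (hD : IsSelfAdjoint D)
    (hDK : ∃ c > (0:ℝ), ∀ y : Hm,
      c * ‖y‖ ^ 2 ≤ (inner ℂ ((D + (adjoint K) ∘L A ∘L K) y) y : ℂ).re)
    -- `aPlus = sup W(A)`
    (aPlus : ℝ)
    (haPlus : IsLUB {r : ℝ | ∃ x : Hp, ‖x‖ = 1 ∧ r = (inner ℂ (A x) x : ℂ).re} aPlus)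
    (lam : ℂ) (him : lam.im ≠ 0)
    (hcond : 0 ≤ lam.re ^ 2 - 2 * aPlus * lam.re + lam.im ^ 2) :
    lam ∉ spectrum ℂ (blockOp A K D) :=
  stmt5_general A K D hA hApos hK hD aPlus haPlus lam him hcond
end

section
/- Let S be a bounded invertible operator on a complex Hilbert space with σ(S) contained in the sector {re^{it} : r > 0, |t| < π/2}, and let P, Q be bounded operators with P² = Q² = S and σ(P), σ(Q) both contained in the sector {re^{it} : r > 0, |t| < π/4}. Then P = Q. -/
/-! `P² = Q²` says that `D = P - Q` solves the Sylvester equation `P D + D Q = 0`. The Cayley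
transform `C(T) = (T - 1)(T + 1)⁻¹` sends an operator with spectrum in the open right half-plane
to one with spectrum in the open unit disc, and the equation turns into `C(P) D C(Q) = D`.
Hence `D = C(P)ⁿ D C(Q)ⁿ`, which tends to `0` by Gelfand's formula. -/

open ContinuousLinearMap

open Filter Topology

section Cayley

variable {𝕜 A : Type*} [Field 𝕜] [Ring A] [Algebra 𝕜 A]

noncomputable def cayley (a : A) : A := (a - 1) * Ring.inverse (a + 1)

theorem cayley_mul_mul_cayley {a b x : A} (ha : IsUnit (a + 1)) (hb : IsUnit (b + 1))
    (h : a * x + x * b = 0) : cayley a * x * cayley b = x := by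
  have hleft : x * (b - 1) = -((a + 1) * x) :=
    calc x * (b - 1) = -((a + 1) * x) + (a * x + x * b) := by noncomm_ring
      _ = -((a + 1) * x) := by rw [h, add_zero]
  have hright : (a - 1) * x = -(x * (b + 1)) :=
    calc (a - 1) * x = -(x * (b + 1)) + (a * x + x * b) := by noncomm_ring
      _ = -(x * (b + 1)) := by rw [h, add_zero]
  calc cayley a * x * cayley b
      = (a - 1) * (Ring.inverse (a + 1) * (x * (b - 1))) * Ring.inverse (b + 1) := by
        simp only [cayley, mul_assoc]
    _ = x * ((b + 1) * Ring.inverse (b + 1)) := by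
        rw [hleft, mul_neg, ← mul_assoc, Ring.inverse_mul_cancel _ ha, one_mul, mul_neg,
          hright, neg_neg, mul_assoc]
    _ = x := by rw [Ring.mul_inverse_cancel _ hb, mul_one]

theorem cayley_pow_mul_mul_cayley_pow {a b x : A} (ha : IsUnit (a + 1)) (hb : IsUnit (b + 1))
    (h : a * x + x * b = 0) (n : ℕ) : cayley a ^ n * x * cayley b ^ n = x := by
  induction n with
  | zero => simp
  | succ n ih =>
    calc cayley a ^ (n + 1) * x * cayley b ^ (n + 1)
        = cayley a ^ n * (cayley a * x * cayley b) * cayley b ^ n := by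
          rw [pow_succ, pow_succ']; simp only [mul_assoc]
      _ = x := by rw [cayley_mul_mul_cayley ha hb h, ih]

theorem algebraMap_sub_cayley {a : A} (ha : IsUnit (a + 1)) (w : 𝕜) :
    algebraMap 𝕜 A w - cayley a
      = (algebraMap 𝕜 A (1 + w) - algebraMap 𝕜 A (1 - w) * a) * Ring.inverse (a + 1) :=
  calc algebraMap 𝕜 A w - cayley a
      = (algebraMap 𝕜 A w * (a + 1) - (a - 1)) * Ring.inverse (a + 1) := by
        rw [sub_mul, mul_assoc, Ring.mul_inverse_cancel _ ha, mul_one, cayley]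
    _ = _ := by
        congr 1
        simp only [map_add, map_sub, map_one]
        noncomm_ring

theorem exists_eq_div_of_mem_spectrum_cayley [CharZero 𝕜] {a : A} (ha : IsUnit (a + 1)) {w : 𝕜}
    (hw : w ∈ spectrum 𝕜 (cayley a)) : ∃ z ∈ spectrum 𝕜 a, w = (z - 1) / (z + 1) := by
  have hw1 : 1 - w ≠ 0 := by
    intro hw1
    refine spectrum.mem_iff.mp hw ?_
    rw [algebraMap_sub_cayley ha, hw1, map_zero, zero_mul, sub_zero]
    exact ((Ne.isUnit (by norm_num [← sub_eq_zero.mp hw1])).map _).mul ha.ringInverse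
  -- `(1 + w) / (1 - w)` is the preimage of `w` under `z ↦ (z - 1) / (z + 1)`.
  refine ⟨(1 + w) / (1 - w), spectrum.mem_iff.mpr fun hz => spectrum.mem_iff.mp hw ?_, ?_⟩
  · rw [algebraMap_sub_cayley ha, ← mul_div_cancel₀ (1 + w) hw1, map_mul, ← mul_sub]
    exact ((hw1.isUnit.map _).mul hz).mul ha.ringInverse
  · field_simp
    ring

theorem isUnit_add_one_of_forall_re_pos [Algebra ℂ A] {a : A}
    (ha : ∀ z ∈ spectrum ℂ a, 0 < z.re) : IsUnit (a + 1) := by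
  have h : IsUnit (algebraMap ℂ A (-1) - a) :=
    spectrum.notMem_iff.mp fun h => absurd (ha _ h) (by norm_num)
  rwa [map_neg, map_one, ← neg_add', IsUnit.neg_iff, add_comm] at h

end Cayley

theorem Complex.norm_sub_one_div_add_one_lt_one {z : ℂ} (hz : 0 < z.re) :
    ‖(z - 1) / (z + 1)‖ < 1 := by
  have hpos : 0 < ‖z + 1‖ :=
    lt_of_lt_of_le (by rw [Complex.add_re, Complex.one_re]; linarith) (Complex.re_le_norm _)
  rw [norm_div, div_lt_one hpos, ← sq_lt_sq₀ (norm_nonneg _) hpos.le, Complex.sq_norm,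
    Complex.sq_norm, Complex.normSq_apply, Complex.normSq_apply]
  simp only [Complex.sub_re, Complex.add_re, Complex.sub_im, Complex.add_im, Complex.one_re,
    Complex.one_im]
  nlinarith

section BanachAlgebra

variable {A : Type*} [NormedRing A] [NormedAlgebra ℂ A] [CompleteSpace A]

theorem tendsto_pow_atTop_nhds_zero_of_spectralRadius_lt_one {a : A}
    (h : spectralRadius ℂ a < 1) : Tendsto (a ^ ·) atTop (𝓝 0) := by
  obtain ⟨r, hρr, hr1⟩ := ENNReal.lt_iff_exists_nnreal_btwn.mp h
  have hbound : ∀ᶠ n : ℕ in atTop, ‖a ^ n‖ ≤ (r : ℝ) ^ n := by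
    filter_upwards [(spectrum.pow_nnnorm_pow_one_div_tendsto_nhds_spectralRadius a)
      |>.eventually_lt_const hρr, eventually_ne_atTop 0] with n hn hn0
    have hlt : (‖a ^ n‖₊ : ENNReal) < (r : ENNReal) ^ n :=
      calc (‖a ^ n‖₊ : ENNReal) = ((‖a ^ n‖₊ : ENNReal) ^ (1 / n : ℝ)) ^ (n : ℝ) := by
            rw [one_div, ENNReal.rpow_inv_rpow (by exact_mod_cast hn0)]
        _ < (r : ENNReal) ^ (n : ℝ) := ENNReal.rpow_lt_rpow hn (by positivity)
        _ = (r : ENNReal) ^ n := ENNReal.rpow_natCast _ _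
    exact_mod_cast hlt.le
  exact squeeze_zero_norm' hbound (tendsto_pow_atTop_nhds_zero_of_lt_one r.2 (mod_cast hr1))

theorem tendsto_pow_atTop_nhds_zero_of_forall_norm_lt_one {a : A}
    (h : ∀ z ∈ spectrum ℂ a, ‖z‖ < 1) : Tendsto (a ^ ·) atTop (𝓝 0) := by
  refine tendsto_pow_atTop_nhds_zero_of_spectralRadius_lt_one ?_
  rcases (spectrum ℂ a).eq_empty_or_nonempty with hempty | hne
  · simp [spectralRadius, hempty]
  · exact_mod_cast spectrum.spectralRadius_lt_of_forall_lt_of_nonempty hne (r := 1)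
      fun z hz => mod_cast h z hz

theorem tendsto_cayley_pow_atTop_nhds_zero {a : A} (ha : ∀ z ∈ spectrum ℂ a, 0 < z.re) :
    Tendsto (cayley a ^ ·) atTop (𝓝 0) :=
  tendsto_pow_atTop_nhds_zero_of_forall_norm_lt_one fun w hw => by
    obtain ⟨z, hz, rfl⟩ :=
      exists_eq_div_of_mem_spectrum_cayley (isUnit_add_one_of_forall_re_pos ha) hw
    exact Complex.norm_sub_one_div_add_one_lt_one (ha z hz)

theorem eq_zero_of_mul_add_mul_eq_zero {a b x : A} (ha : ∀ z ∈ spectrum ℂ a, 0 < z.re)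
    (hb : ∀ z ∈ spectrum ℂ b, 0 < z.re) (h : a * x + x * b = 0) : x = 0 := by
  have hlim : Tendsto (fun n => cayley a ^ n * x * cayley b ^ n) atTop (𝓝 0) := by
    simpa using ((tendsto_cayley_pow_atTop_nhds_zero ha).mul_const x).mul
      (tendsto_cayley_pow_atTop_nhds_zero hb)
  simp only [cayley_pow_mul_mul_cayley_pow (isUnit_add_one_of_forall_re_pos ha)
    (isUnit_add_one_of_forall_re_pos hb) h] at hlim
  exact tendsto_nhds_unique tendsto_const_nhds hlim

end BanachAlgebra

theorem stmt8_general {H : Type*} [NormedAddCommGroup H] [InnerProductSpace ℂ H] [CompleteSpace H]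
    (S P Q : H →L[ℂ] H)
    (hP : P ∘L P = S) (hQ : Q ∘L Q = S)
    (hsP : ∀ z ∈ spectrum ℂ P, z ≠ 0 ∧ |z.arg| < Real.pi / 4)
    (hsQ : ∀ z ∈ spectrum ℂ Q, z ≠ 0 ∧ |z.arg| < Real.pi / 4) :
    P = Q := by
  have re_pos {T : H →L[ℂ] H} (hT : ∀ z ∈ spectrum ℂ T, z ≠ 0 ∧ |z.arg| < Real.pi / 4) :
      ∀ z ∈ spectrum ℂ T, 0 < z.re := fun z hz =>
    (Complex.abs_arg_lt_pi_div_two_iff.mp <|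
      (hT z hz).2.trans (by linarith [Real.pi_pos])).resolve_right (hT z hz).1
  have hPQ : P * P = Q * Q := by rw [mul_def, mul_def, hP, hQ]
  refine sub_eq_zero.mp (eq_zero_of_mul_add_mul_eq_zero (re_pos hsP) (re_pos hsQ) ?_)
  calc P * (P - Q) + (P - Q) * Q = P * P - Q * Q := by noncomm_ring
    _ = 0 := by rw [hPQ, sub_self]

theorem stmt8 {H : Type*} [NormedAddCommGroup H] [InnerProductSpace ℂ H] [CompleteSpace H]
    (S P Q : H →L[ℂ] H) (hS : IsUnit S)
    (hsS : ∀ z ∈ spectrum ℂ S, z ≠ 0 ∧ |z.arg| < Real.pi / 2)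
    (hP : P ∘L P = S) (hQ : Q ∘L Q = S)
    (hsP : ∀ z ∈ spectrum ℂ P, z ≠ 0 ∧ |z.arg| < Real.pi / 4)
    (hsQ : ∀ z ∈ spectrum ℂ Q, z ≠ 0 ∧ |z.arg| < Real.pi / 4) :
    P = Q :=
  stmt8_general S P Q hP hQ hsP hsQ
end

section
/- Let S be a bounded invertible operator on a Hilbert space with σ(S) ⊆ {Re z > 0}, and let S^{1/2} be the square root from the holomorphic functional calculus. Let T₁, T₂ be bounded operators from Hilbert spaces K₁, K₂ (with fundamental symmetries) into H with T_k T_k⁺ = S for k = 1,2. Then with U_k = S^{-1/2} T_k, the operator W = U₁⁺ U₂ satisfies W W⁺ = U₁⁺U₁, W⁺W = U₂⁺U₂, and T₁ W = T₂. -/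
/-!
Because `S^{1/2}` is Krein self-adjoint, so is its inverse, and `T_k T_k⁺ = S` gives
`T_k U_k⁺ = T_k T_k⁺ S^{-1/2} = S^{1/2}`. Hence `U_k U_k⁺ = 1` and `T₁ W = S^{1/2} U₂ = T₂`.
Finally `W⁺ = U₂⁺ U₁`, so `W W⁺ = U₁⁺ (U₂ U₂⁺) U₁ = U₁⁺ U₁` and `W⁺ W = U₂⁺ (U₁ U₁⁺) U₂ = U₂⁺ U₂`.
-/

open ContinuousLinearMap

namespace ContinuousLinearMap

variable {𝕜 E F G H : Type*} [RCLike 𝕜]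
  [NormedAddCommGroup E] [InnerProductSpace 𝕜 E] [CompleteSpace E]
  [NormedAddCommGroup F] [InnerProductSpace 𝕜 F] [CompleteSpace F]
  [NormedAddCommGroup G] [InnerProductSpace 𝕜 G] [CompleteSpace G]
  [NormedAddCommGroup H] [InnerProductSpace 𝕜 H] [CompleteSpace H]

noncomputable def kreinAdjoint (JE : E →L[𝕜] E) (JF : F →L[𝕜] F) (A : E →L[𝕜] F) : F →L[𝕜] E :=
  JE ∘L adjoint A ∘L JF

theorem kreinAdjoint_one {J : E →L[𝕜] E} (hJ : J ∘L J = 1) :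
    kreinAdjoint J J (1 : E →L[𝕜] E) = 1 := by
  rw [kreinAdjoint, ← star_eq_adjoint, star_one, one_def, id_comp, hJ, one_def]

theorem kreinAdjoint_comp {JE : E →L[𝕜] E} {JF : F →L[𝕜] F} {JG : G →L[𝕜] G}
    (hJF : JF ∘L JF = 1) (A : F →L[𝕜] G) (B : E →L[𝕜] F) :
    kreinAdjoint JE JG (A ∘L B) = kreinAdjoint JE JF B ∘L kreinAdjoint JF JG A := by
  simp only [kreinAdjoint, adjoint_comp, comp_assoc]
  rw [← comp_assoc JF JF, hJF, one_def, id_comp]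

theorem kreinAdjoint_kreinAdjoint {JE : E →L[𝕜] E} {JF : F →L[𝕜] F}
    (hJEsa : IsSelfAdjoint JE) (hJE : JE ∘L JE = 1) (hJFsa : IsSelfAdjoint JF)
    (hJF : JF ∘L JF = 1) (A : E →L[𝕜] F) : kreinAdjoint JF JE (kreinAdjoint JE JF A) = A := by
  simp only [kreinAdjoint, adjoint_comp, adjoint_adjoint, hJEsa.adjoint_eq, hJFsa.adjoint_eq,
    comp_assoc, hJE]
  rw [← comp_assoc JF JF, hJF, one_def, id_comp, one_def, comp_id]

theorem kreinAdjoint_eq_self_of_comp_eq {J : E →L[𝕜] E} (hJ : J ∘L J = 1) {A : E →L[𝕜] E}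
    (hA : J ∘L A = adjoint A ∘L J) : kreinAdjoint J J A = A := by
  rw [kreinAdjoint, ← hA, ← comp_assoc, hJ, one_def, id_comp]

theorem kreinAdjoint_eq_self_of_rightInverse {J : E →L[𝕜] E} (hJ : J ∘L J = 1)
    {A B : E →L[𝕜] E} (hA : kreinAdjoint J J A = A) (hAB : A ∘L B = 1) :
    kreinAdjoint J J B = B := calc
  kreinAdjoint J J B = kreinAdjoint J J B ∘L (A ∘L B) := by rw [hAB, one_def, comp_id]
  _ = kreinAdjoint J J (A ∘L B) ∘L B := by rw [kreinAdjoint_comp hJ, hA, comp_assoc]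
  _ = B := by rw [hAB, kreinAdjoint_one hJ, one_def, id_comp]

theorem comp_kreinAdjoint_comp_eq {JE : E →L[𝕜] E} {J : H →L[𝕜] H} (hJ : J ∘L J = 1)
    {P Q : H →L[𝕜] H} {T : E →L[𝕜] H} (hQ : kreinAdjoint J J Q = Q)
    (hT : T ∘L kreinAdjoint JE J T = P ∘L P) (hPQ : P ∘L Q = 1) :
    T ∘L kreinAdjoint JE J (Q ∘L T) = P := by
  rw [kreinAdjoint_comp hJ, hQ, ← comp_assoc, hT, comp_assoc, hPQ, one_def, comp_id]

theorem kreinAdjoint_kreinAdjoint_comp {JE : E →L[𝕜] E} {JF : F →L[𝕜] F} {JH : H →L[𝕜] H}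
    (hJEsa : IsSelfAdjoint JE) (hJE : JE ∘L JE = 1) (hJHsa : IsSelfAdjoint JH)
    (hJH : JH ∘L JH = 1) (U : E →L[𝕜] H) (V : F →L[𝕜] H) :
    kreinAdjoint JF JE (kreinAdjoint JE JH U ∘L V) = kreinAdjoint JF JH V ∘L U := by
  rw [kreinAdjoint_comp hJH, kreinAdjoint_kreinAdjoint hJEsa hJE hJHsa hJH]

theorem kreinAdjoint_comp_comp_kreinAdjoint {JE : E →L[𝕜] E} {JF : F →L[𝕜] F}
    {JH : H →L[𝕜] H} (U : E →L[𝕜] H) {V : F →L[𝕜] H} (hV : V ∘L kreinAdjoint JF JH V = 1) :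
    (kreinAdjoint JE JH U ∘L V) ∘L (kreinAdjoint JF JH V ∘L U) = kreinAdjoint JE JH U ∘L U := by
  rw [comp_assoc, ← comp_assoc V, hV, one_def, id_comp]

end ContinuousLinearMap

theorem stmt14_general {H K1 K2 : Type*}
    [NormedAddCommGroup H] [InnerProductSpace ℂ H] [CompleteSpace H]
    [NormedAddCommGroup K1] [InnerProductSpace ℂ K1] [CompleteSpace K1]
    [NormedAddCommGroup K2] [InnerProductSpace ℂ K2] [CompleteSpace K2]
    -- fundamental symmetries on `H`, `K1`, `K2`
    (JH : H →L[ℂ] H) (J1 : K1 →L[ℂ] K1) (J2 : K2 →L[ℂ] K2)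
    (hJHsa : IsSelfAdjoint JH) (hJHinv : JH ∘L JH = 1)
    (hJ1sa : IsSelfAdjoint J1) (hJ1inv : J1 ∘L J1 = 1)
    (S : H →L[ℂ] H)
    -- `P = S^{1/2}` from the holomorphic functional calculus: `P² = S`,
    -- spectrum in the sector `|arg| < π/4`, Krein self-adjoint; `Pinv = S^{-1/2}`
    (P Pinv : H →L[ℂ] H) (hPsq : P ∘L P = S)
    (hPKrein : JH ∘L P = adjoint P ∘L JH)
    (hPinv : P ∘L Pinv = 1 ∧ Pinv ∘L P = 1)
    -- synthesis operators with `T_k T_k⁺ = S`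
    (T1 : K1 →L[ℂ] H) (T2 : K2 →L[ℂ] H)
    (hT1 : T1 ∘L (J1 ∘L adjoint T1 ∘L JH) = S)
    (hT2 : T2 ∘L (J2 ∘L adjoint T2 ∘L JH) = S) :
    -- with `U_k = S^{-1/2} T_k` and `W = U₁⁺ U₂`:
    letI U1 : K1 →L[ℂ] H := Pinv ∘L T1
    letI U2 : K2 →L[ℂ] H := Pinv ∘L T2
    letI W : K2 →L[ℂ] K1 := (J1 ∘L adjoint U1 ∘L JH) ∘L U2
    W ∘L (J2 ∘L adjoint W ∘L J1) = (J1 ∘L adjoint U1 ∘L JH) ∘L U1 ∧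
    (J2 ∘L adjoint W ∘L J1) ∘L W = (J2 ∘L adjoint U2 ∘L JH) ∘L U2 ∧
    T1 ∘L W = T2 := by
  simp only [← kreinAdjoint.eq_1] at hT1 hT2 ⊢
  have hPinvKrein : kreinAdjoint JH JH Pinv = Pinv :=
    kreinAdjoint_eq_self_of_rightInverse hJHinv (kreinAdjoint_eq_self_of_comp_eq hJHinv hPKrein)
      hPinv.1
  have hT1U1 : T1 ∘L kreinAdjoint J1 JH (Pinv ∘L T1) = P :=
    comp_kreinAdjoint_comp_eq hJHinv hPinvKrein (hT1.trans hPsq.symm) hPinv.1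
  have hT2U2 : T2 ∘L kreinAdjoint J2 JH (Pinv ∘L T2) = P :=
    comp_kreinAdjoint_comp_eq hJHinv hPinvKrein (hT2.trans hPsq.symm) hPinv.1
  have hU1 : (Pinv ∘L T1) ∘L kreinAdjoint J1 JH (Pinv ∘L T1) = 1 := by
    rw [comp_assoc, hT1U1, hPinv.2]
  have hU2 : (Pinv ∘L T2) ∘L kreinAdjoint J2 JH (Pinv ∘L T2) = 1 := by
    rw [comp_assoc, hT2U2, hPinv.2]
  rw [kreinAdjoint_kreinAdjoint_comp hJ1sa hJ1inv hJHsa hJHinv]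
  refine ⟨kreinAdjoint_comp_comp_kreinAdjoint _ hU2, kreinAdjoint_comp_comp_kreinAdjoint _ hU1, ?_⟩
  rw [← comp_assoc, hT1U1, ← comp_assoc, hPinv.1, one_def, id_comp]

theorem stmt14 {H K1 K2 : Type*}
    [NormedAddCommGroup H] [InnerProductSpace ℂ H] [CompleteSpace H]
    [NormedAddCommGroup K1] [InnerProductSpace ℂ K1] [CompleteSpace K1]
    [NormedAddCommGroup K2] [InnerProductSpace ℂ K2] [CompleteSpace K2]
    -- fundamental symmetries on `H`, `K1`, `K2`
    (JH : H →L[ℂ] H) (J1 : K1 →L[ℂ] K1) (J2 : K2 →L[ℂ] K2)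
    (hJHsa : IsSelfAdjoint JH) (hJHinv : JH ∘L JH = 1)
    (hJ1sa : IsSelfAdjoint J1) (hJ1inv : J1 ∘L J1 = 1)
    (hJ2sa : IsSelfAdjoint J2) (hJ2inv : J2 ∘L J2 = 1)
    (S : H →L[ℂ] H) (hSinv : IsUnit S)
    (hs : ∀ z ∈ spectrum ℂ S, 0 < z.re)
    -- `P = S^{1/2}` from the holomorphic functional calculus: `P² = S`,
    -- spectrum in the sector `|arg| < π/4`, Krein self-adjoint; `Pinv = S^{-1/2}`
    (P Pinv : H →L[ℂ] H) (hPsq : P ∘L P = S)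
    (hsP : ∀ z ∈ spectrum ℂ P, z ≠ 0 ∧ |z.arg| < Real.pi / 4)
    (hPKrein : JH ∘L P = adjoint P ∘L JH)
    (hPinv : P ∘L Pinv = 1 ∧ Pinv ∘L P = 1)
    -- synthesis operators with `T_k T_k⁺ = S`
    (T1 : K1 →L[ℂ] H) (T2 : K2 →L[ℂ] H)
    (hT1 : T1 ∘L (J1 ∘L adjoint T1 ∘L JH) = S)
    (hT2 : T2 ∘L (J2 ∘L adjoint T2 ∘L JH) = S) :
    -- with `U_k = S^{-1/2} T_k` and `W = U₁⁺ U₂`: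
    letI U1 : K1 →L[ℂ] H := Pinv ∘L T1
    letI U2 : K2 →L[ℂ] H := Pinv ∘L T2
    letI W : K2 →L[ℂ] K1 := (J1 ∘L adjoint U1 ∘L JH) ∘L U2
    W ∘L (J2 ∘L adjoint W ∘L J1) = (J1 ∘L adjoint U1 ∘L JH) ∘L U1 ∧
    (J2 ∘L adjoint W ∘L J1) ∘L W = (J2 ∘L adjoint U2 ∘L JH) ∘L U2 ∧
    T1 ∘L W = T2 :=
  stmt14_general JH J1 J2 hJHsa hJHinv hJ1sa hJ1inv S P Pinv hPsq hPKrein hPinv T1 T2 hT1 hT2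
end
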